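/- arXiv:1709.05033 — 2 statements merged into one kernel-verified Lean document; each statement's English description precedes it below -/
import Mathlib

section
/- Suppose {P₁,P₂} is a positive definite bimatrix solution of the bimatrix Riccati equation −{Q,0} = {A₁,A₂}^H{P₁,P₂}{A₁,A₂} − {P₁,P₂} − {A₁,A₂}^H{P₁,P₂}{B₁,B₂}{S₁,S₂}^{-1}{B₁,B₂}^H{P₁,P₂}{A₁,A₂}, where {S₁,S₂} = {R,0} + {B₁,B₂}^H{P₁,P₂}{B₁,B₂} is invertible, and define the feedback gain bimatrix {K₁*,K₂*} = −{S₁,S₂}^{-1}{B₁,B₂}^H{P₁,P₂}{A₁,A₂}. Then: (i) every solution of the closed-loop system x(k+1) = ({A₁,A₂} + {B₁,B₂}{K₁*,K₂*})x(k) converges to 0; (ii) for every initial condition x₀ and every control sequence u, J(u) ≥ Re(x₀^H P₁ x₀ + x₀^H P₂^# x₀^#), and the feedback control u*(k) = K₁* x(k) + (K₂*)^# x^#(k) achieves J(u*) = Re(x₀^H P₁ x₀ + x₀^H P₂^# x₀^#). -/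
open Matrix Filter Topology
open scoped ENNReal ComplexOrder

noncomputable section

/-- Entrywise complex conjugate of a matrix, `M^#`. -/
def mconj {k l : Type*} (A : Matrix k l ℂ) : Matrix k l ℂ := A.map (starRingEnd ℂ)

/-- A bimatrix `{A₁, A₂}` of `k × l` complex matrices. -/
structure Bimatrix (k l : ℕ) where
  fst : Matrix (Fin k) (Fin l) ℂ
  snd : Matrix (Fin k) (Fin l) ℂ

namespace Bimatrix

variable {k l p : ℕ}

/-- The action of a bimatrix on a vector: `{A₁,A₂}x = A₁x + A₂^# x^#`. -/
def apply (A : Bimatrix k l) (x : Fin l → ℂ) : Fin k → ℂ :=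
  A.fst *ᵥ x + mconj A.snd *ᵥ star x

/-- Bimatrix product `{A₁,A₂}{B₁,B₂} = {A₁B₁ + A₂^#B₂, A₁^#B₂ + A₂B₁}`. -/
def mul (A : Bimatrix k l) (B : Bimatrix l p) : Bimatrix k p :=
  ⟨A.fst * B.fst + mconj A.snd * B.snd, mconj A.fst * B.snd + A.snd * B.fst⟩

/-- Bimatrix conjugate transpose `{A₁,A₂}^H = {A₁^H, A₂^T}`. -/
def conjT (A : Bimatrix k l) : Bimatrix l k :=
  ⟨A.fst.conjTranspose, A.snd.transpose⟩

def add (A B : Bimatrix k l) : Bimatrix k l := ⟨A.fst + B.fst, A.snd + B.snd⟩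

def sub (A B : Bimatrix k l) : Bimatrix k l := ⟨A.fst - B.fst, A.snd - B.snd⟩

def neg (A : Bimatrix k l) : Bimatrix k l := ⟨-A.fst, -A.snd⟩

/-- The identity bimatrix `{I, 0}`. -/
def one (k : ℕ) : Bimatrix k k := ⟨1, 0⟩

/-- A bimatrix is Hermitian if `P₁^H = P₁` and `P₂^T = P₂`. -/
def IsHermitian (P : Bimatrix k k) : Prop :=
  P.fst.conjTranspose = P.fst ∧ P.snd.transpose = P.snd

/-- The real quadratic form `Re (x^H P₁ x + x^H P₂^# x^#)` of a bimatrix. -/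
def quadForm (P : Bimatrix k k) (x : Fin k → ℂ) : ℝ :=
  (star x ⬝ᵥ P.apply x).re

/-- Positive semidefinite bimatrix. -/
def PosSemidef (P : Bimatrix k k) : Prop :=
  P.IsHermitian ∧ ∀ x : Fin k → ℂ, 0 ≤ P.quadForm x

/-- Positive definite bimatrix. -/
def PosDef (P : Bimatrix k k) : Prop :=
  P.IsHermitian ∧ (∀ x : Fin k → ℂ, 0 ≤ P.quadForm x) ∧
    ∀ x : Fin k → ℂ, x ≠ 0 → 0 < P.quadForm x

/-- The Loewner-type order on bimatrices: `X ≤ Y` iff `Y - X ≥ 0`. -/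
def le (X Y : Bimatrix k k) : Prop := PosSemidef (Y.sub X)

/-- `T` is the (two-sided) inverse of the bimatrix `S`. -/
def IsInv (S T : Bimatrix k k) : Prop := S.mul T = one k ∧ T.mul S = one k

/-- The complex-matrix representation of a bimatrix. -/
def toMat (S : Bimatrix k k) : Matrix (Fin k ⊕ Fin k) (Fin k ⊕ Fin k) ℂ :=
  fromBlocks S.fst (mconj S.snd) S.snd (mconj S.fst)

/-- The inverse of a bimatrix, extracted from the inverse of its complex-matrix
representation.  When `S` is invertible as a bimatrix, `S.inv` is its genuine inverse. -/
def inv (S : Bimatrix k k) : Bimatrix k k :=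
  ⟨(toMat S)⁻¹.toBlocks₁₁, (toMat S)⁻¹.toBlocks₂₁⟩

end Bimatrix

variable {n m : ℕ}

/-- The complex-valued linear system `x(k+1) = {A₁,A₂}x(k) + {B₁,B₂}u(k)` is
stabilizable if some full state feedback `u(k) = K₁x(k) + K₂^#x^#(k)` drives every
closed-loop solution to zero. -/
def Stabilizable (A : Bimatrix n n) (B : Bimatrix n m) : Prop :=
  ∃ K : Bimatrix m n, ∀ x : ℕ → (Fin n → ℂ),
    (∀ k : ℕ, x (k + 1) = A.apply (x k) + B.apply (K.apply (x k))) →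
    Tendsto x atTop (𝓝 0)

/-- `{S₁,S₂} = {R,0} + {B₁,B₂}^H {P₁,P₂} {B₁,B₂}`. -/
def Smat (B : Bimatrix n m) (R : Matrix (Fin m) (Fin m) ℂ) (P : Bimatrix n n) :
    Bimatrix m m :=
  (Bimatrix.mk R 0).add (B.conjT.mul (P.mul B))

/-- The bimatrix Riccati equation
`-{Q,0} = {A}^H{P}{A} - {P} - {A}^H{P}{B}{S}⁻¹{B}^H{P}{A}`, where
`{S} = {R,0} + {B}^H{P}{B}` is required to be invertible. -/
def RiccatiEq (A : Bimatrix n n) (B : Bimatrix n m)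
    (Q : Matrix (Fin n) (Fin n) ℂ) (R : Matrix (Fin m) (Fin m) ℂ)
    (P : Bimatrix n n) : Prop :=
  ∃ T : Bimatrix m m, (Smat B R P).IsInv T ∧
    (Bimatrix.mk Q 0).neg =
      ((A.conjT.mul (P.mul A)).sub P).sub
        (A.conjT.mul (P.mul (B.mul (T.mul (B.conjT.mul (P.mul A))))))

/-- The trajectory of `x(k+1) = {A₁,A₂}x(k) + {B₁,B₂}u(k)` from `x₀` under `u`. -/
def traj (A : Bimatrix n n) (B : Bimatrix n m) (x₀ : Fin n → ℂ)
    (u : ℕ → Fin m → ℂ) : ℕ → Fin n → ℂ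
  | 0 => x₀
  | k + 1 => A.apply (traj A B x₀ u k) + B.apply (u k)

/-- The quadratic cost `J = Σ_k (x(k)^H Q x(k) + u(k)^H R u(k))`, valued in `[0,∞]`. -/
def cost (Q : Matrix (Fin n) (Fin n) ℂ) (R : Matrix (Fin m) (Fin m) ℂ)
    (x : ℕ → Fin n → ℂ) (u : ℕ → Fin m → ℂ) : ℝ≥0∞ :=
  ∑' k : ℕ, ENNReal.ofReal ((star (x k) ⬝ᵥ (Q *ᵥ x k)).re + (star (u k) ⬝ᵥ (R *ᵥ u k)).re)

/-!
For the real inner product `⟪x, y⟫ = Re (x^H y)` on `ℂⁿ`, bimatrices act ℝ-linearly, the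
bimatrix product is composition, `{A₁,A₂}^H` is the adjoint, and
`V x := Re (x^H P₁ x + x^H P₂^# x^#)` is `⟪x, {P} x⟫`. In these terms the Riccati equation
is exactly the completing-the-square identity
`V ({A} x + {B} u) + x^H Q x + u^H R u = V x + ⟪u - {K*} x, {S} (u - {K*} x)⟫`.
Summed along a trajectory it telescopes: the cost of the first `N` steps plus `V (x N)` is
`V x₀` plus nonnegative `{S}`-terms, which vanish under the feedback `u = {K*} x`; so the
feedback cost is at most `V x₀`. Conversely, a finite cost makes the stage costs summable,
so `x k → 0` because `x^H Q x` dominates a multiple of `‖x‖²`; then `V (x N) → 0` and every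
cost is at least `V x₀`. The closed loop is stable because its cost `V x₀` is finite.
-/

lemma mconj_mconj {k l : Type*} (M : Matrix k l ℂ) : mconj (mconj M) = M := by
  ext; simp [mconj]

lemma mconj_mul {k l p : Type*} [Fintype l] (M : Matrix k l ℂ) (N : Matrix l p ℂ) :
    mconj (M * N) = mconj M * mconj N :=
  Matrix.map_mul

lemma mconj_add {k l : Type*} (M N : Matrix k l ℂ) : mconj (M + N) = mconj M + mconj N := by
  ext; simp [mconj]

lemma mconj_neg {k l : Type*} (M : Matrix k l ℂ) : mconj (-M) = -mconj M := by
  ext; simp [mconj]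

lemma mconj_sub {k l : Type*} (M N : Matrix k l ℂ) : mconj (M - N) = mconj M - mconj N := by
  ext; simp [mconj]

lemma mconj_transpose {k l : Type*} (M : Matrix k l ℂ) : mconj Mᵀ = Mᴴ := rfl

lemma transpose_mconj {k l : Type*} (M : Matrix k l ℂ) : (mconj M)ᵀ = Mᴴ := rfl

lemma mconj_conjTranspose {k l : Type*} (M : Matrix k l ℂ) : mconj Mᴴ = Mᵀ := by
  ext; simp [mconj]

lemma conjTranspose_mconj {k l : Type*} (M : Matrix k l ℂ) : (mconj M)ᴴ = Mᵀ := by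
  ext; simp [mconj]

lemma star_mulVec_eq_mconj_mulVec {k l : Type*} [Fintype l] (M : Matrix k l ℂ) (v : l → ℂ) :
    star (M *ᵥ v) = mconj M *ᵥ star v :=
  funext (RingHom.map_mulVec (starRingEnd ℂ) M v)

lemma re_star_dotProduct_comm {ι : Type*} [Fintype ι] (x y : ι → ℂ) :
    (star x ⬝ᵥ y).re = (star y ⬝ᵥ x).re := by
  rw [star_dotProduct]; exact Complex.conj_re _

namespace Bimatrix

variable {k l p : ℕ}

lemma apply_add (M : Bimatrix k l) (x y : Fin l → ℂ) :
    M.apply (x + y) = M.apply x + M.apply y := by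
  simp only [apply, star_add, mulVec_add]; abel

lemma add_apply (M N : Bimatrix k l) (x : Fin l → ℂ) :
    (M.add N).apply x = M.apply x + N.apply x := by
  simp only [apply, add, mconj_add, add_mulVec]; abel

lemma neg_apply (M : Bimatrix k l) (x : Fin l → ℂ) : M.neg.apply x = -M.apply x := by
  simp only [apply, neg, mconj_neg, neg_mulVec]; abel

lemma sub_apply (M N : Bimatrix k l) (x : Fin l → ℂ) :
    (M.sub N).apply x = M.apply x - N.apply x := by
  simp only [apply, sub, mconj_sub, sub_mulVec]; abel

lemma mul_apply (M : Bimatrix k l) (N : Bimatrix l p) (x : Fin p → ℂ) :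
    (M.mul N).apply x = M.apply (N.apply x) := by
  simp only [apply, mul, mconj_add, mconj_mul, mconj_mconj, star_add,
    star_mulVec_eq_mconj_mulVec, star_star, mulVec_add, add_mulVec, mulVec_mulVec]
  abel

lemma mk_zero_apply (M : Matrix (Fin k) (Fin l) ℂ) (x : Fin l → ℂ) :
    (mk M 0).apply x = M *ᵥ x := by
  simp [apply, mconj]

lemma IsInv.apply_apply {S T : Bimatrix k k} (h : S.IsInv T) (x : Fin k → ℂ) :
    S.apply (T.apply x) = x := by
  rw [← mul_apply, h.1]; simp [one, apply, mconj]

lemma mul_assoc (M : Bimatrix k l) (N : Bimatrix l p) {q : ℕ} (L : Bimatrix p q) :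
    (M.mul N).mul L = M.mul (N.mul L) := by
  simp only [mul, mconj_add, mconj_mul, mconj_mconj, Matrix.add_mul, Matrix.mul_add,
    Matrix.mul_assoc, mk.injEq]
  constructor <;> abel

lemma conjT_conjT (M : Bimatrix k l) : M.conjT.conjT = M := by
  simp [conjT]

lemma conjT_add (M N : Bimatrix k l) : (M.add N).conjT = M.conjT.add N.conjT := by
  simp [conjT, add]

lemma conjT_mul (M : Bimatrix k l) (N : Bimatrix l p) :
    (M.mul N).conjT = N.conjT.mul M.conjT := by
  simp only [mul, conjT, conjTranspose_add, conjTranspose_mul, transpose_add, transpose_mul,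
    mconj_transpose, transpose_mconj, conjTranspose_mconj, mconj_conjTranspose, mk.injEq]
  exact ⟨trivial, add_comm _ _⟩

lemma isHermitian_iff_conjT_eq (P : Bimatrix k k) : P.IsHermitian ↔ P.conjT = P := by
  cases P; simp [IsHermitian, conjT]

lemma re_dotProduct_conjT_apply (M : Bimatrix k l) (x : Fin l → ℂ) (y : Fin k → ℂ) :
    (star x ⬝ᵥ M.conjT.apply y).re = (star (M.apply x) ⬝ᵥ y).re := by
  simp only [apply, conjT, mconj_transpose, star_add, star_mulVec_eq_mconj_mulVec, mconj_mconj,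
    star_star, dotProduct_add, add_dotProduct, Complex.add_re, dotProduct_mulVec,
    vecMul_conjTranspose]
  rw [← star_mulVec_eq_mconj_mulVec M.snd, star_dotProduct, star_star, Complex.star_def,
    Complex.conj_re, dotProduct_comm y]

lemma re_dotProduct_apply (M : Bimatrix k l) (x : Fin l → ℂ) (y : Fin k → ℂ) :
    (star y ⬝ᵥ M.apply x).re = (star (M.conjT.apply y) ⬝ᵥ x).re := by
  simpa only [conjT_conjT] using re_dotProduct_conjT_apply M.conjT y x

lemma IsHermitian.re_dotProduct_apply_comm {P : Bimatrix k k} (hP : P.IsHermitian)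
    (x y : Fin k → ℂ) : (star x ⬝ᵥ P.apply y).re = (star (P.apply x) ⬝ᵥ y).re := by
  have h := re_dotProduct_conjT_apply P x y
  rwa [(isHermitian_iff_conjT_eq P).1 hP] at h

lemma IsHermitian.quadForm_add {P : Bimatrix k k} (hP : P.IsHermitian) (x y : Fin k → ℂ) :
    P.quadForm (x + y) = P.quadForm x + P.quadForm y + 2 * (star x ⬝ᵥ P.apply y).re := by
  have h := hP.re_dotProduct_apply_comm y x
  rw [re_star_dotProduct_comm (P.apply y)] at h
  simp only [quadForm, apply_add, star_add, dotProduct_add, add_dotProduct, Complex.add_re]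
  linarith

lemma continuous_apply (M : Bimatrix k l) : Continuous M.apply := by
  unfold apply; fun_prop

lemma continuous_quadForm (P : Bimatrix k k) : Continuous P.quadForm :=
  Complex.continuous_re.comp (continuous_star.dotProduct P.continuous_apply)

lemma quadForm_zero (P : Bimatrix k k) : P.quadForm 0 = 0 := by
  simp [quadForm]

end Bimatrix

lemma exists_pos_mul_sq_norm_le {E : Type*} [NormedAddCommGroup E] [NormedSpace ℝ E]
    [FiniteDimensional ℝ E] {f : E → ℝ} (hf : Continuous f)
    (hpos : ∀ x, x ≠ 0 → 0 < f x)
    (hhom : ∀ (c : ℝ) (x : E), f (c • x) = c ^ 2 * f x) :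
    ∃ c > 0, ∀ x, c * ‖x‖ ^ 2 ≤ f x := by
  have hf0 : f 0 = 0 := by simpa using hhom 0 0
  rcases subsingleton_or_nontrivial E with hE | hE
  · exact ⟨1, one_pos, fun x => by simp [Subsingleton.elim x 0, hf0]⟩
  obtain ⟨x₀, hx₀, hmin⟩ := (isCompact_sphere (0 : E) 1).exists_isMinOn
    (NormedSpace.sphere_nonempty.2 zero_le_one) hf.continuousOn
  refine ⟨f x₀, hpos x₀ (ne_zero_of_mem_sphere one_ne_zero ⟨x₀, hx₀⟩), fun x => ?_⟩
  rcases eq_or_ne x 0 with rfl | hx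
  · simp [hf0]
  have hnx : ‖x‖ ≠ 0 := norm_ne_zero_iff.2 hx
  have hscale : f x = ‖x‖ ^ 2 * f (‖x‖⁻¹ • x) := by
    rw [← hhom, smul_smul, mul_inv_cancel₀ hnx, one_smul]
  have hmin_x : f x₀ ≤ f (‖x‖⁻¹ • x) := hmin (by simp [norm_smul, hnx])
  rw [hscale, mul_comm]
  exact mul_le_mul_of_nonneg_left hmin_x (sq_nonneg _)

lemma Matrix.PosDef.exists_pos_mul_sq_norm_le_re_dotProduct {ι : Type*} [Fintype ι]
    {Q : Matrix ι ι ℂ} (hQ : Q.PosDef) :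
    ∃ c > 0, ∀ x : ι → ℂ, c * ‖x‖ ^ 2 ≤ (star x ⬝ᵥ Q *ᵥ x).re :=
  exists_pos_mul_sq_norm_le (by fun_prop) (fun _ hx => hQ.re_dotProduct_pos hx)
    (fun c x => by simp [star_smul, mulVec_smul, smul_dotProduct, dotProduct_smul]; ring)

open Bimatrix

def stageCost (Q : Matrix (Fin n) (Fin n) ℂ) (R : Matrix (Fin m) (Fin m) ℂ) (x : Fin n → ℂ)
    (u : Fin m → ℂ) : ℝ :=
  (star x ⬝ᵥ (Q *ᵥ x)).re + (star u ⬝ᵥ (R *ᵥ u)).re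

section Riccati

variable (A : Bimatrix n n) (B : Bimatrix n m) {Q : Matrix (Fin n) (Fin n) ℂ}
  {R : Matrix (Fin m) (Fin m) ℂ} {P : Bimatrix n n}

lemma Smat_apply (u : Fin m → ℂ) :
    (Smat B R P).apply u = R *ᵥ u + B.conjT.apply (P.apply (B.apply u)) := by
  simp only [Smat, Bimatrix.add_apply, mk_zero_apply, Bimatrix.mul_apply]

lemma Smat_quadForm (u : Fin m → ℂ) :
    (Smat B R P).quadForm u = (star u ⬝ᵥ R *ᵥ u).re + P.quadForm (B.apply u) := by
  simp only [quadForm, Smat_apply, dotProduct_add, Complex.add_re, re_dotProduct_conjT_apply]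

lemma Smat_isHermitian (hR : R.IsHermitian) (hP : P.IsHermitian) : (Smat B R P).IsHermitian := by
  rw [isHermitian_iff_conjT_eq] at hP ⊢
  have hR' : (mk R 0).conjT = mk R 0 := by simp [conjT, hR.eq]
  rw [Smat, conjT_add, conjT_mul, conjT_mul, conjT_conjT, hP, hR', Bimatrix.mul_assoc]

theorem riccati_completing_square (hR : R.IsHermitian) (hP : P.IsHermitian) {T : Bimatrix m m}
    (hT : (Smat B R P).IsInv T)
    (heq : (mk Q 0).neg = ((A.conjT.mul (P.mul A)).sub P).sub
      (A.conjT.mul (P.mul (B.mul (T.mul (B.conjT.mul (P.mul A)))))))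
    (x : Fin n → ℂ) (u : Fin m → ℂ) :
    P.quadForm (A.apply x + B.apply u) + stageCost Q R x u =
      P.quadForm x + (Smat B R P).quadForm (u - (T.mul (B.conjT.mul (P.mul A))).neg.apply x) := by
  set S := Smat B R P
  set a := A.apply x
  set b := B.apply u
  set g := B.conjT.apply (P.apply a)
  have hKx : (T.mul (B.conjT.mul (P.mul A))).neg.apply x = -T.apply g := by
    simp only [Bimatrix.neg_apply, Bimatrix.mul_apply, a, g]
  have hQx :
      (star x ⬝ᵥ Q *ᵥ x).re = P.quadForm x - P.quadForm a + (star g ⬝ᵥ T.apply g).re := by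
    have h := congrArg (fun M => (star x ⬝ᵥ M.apply x).re) heq
    simp only [Bimatrix.neg_apply, Bimatrix.sub_apply, mk_zero_apply, Bimatrix.mul_apply,
      dotProduct_neg, dotProduct_sub, Complex.neg_re, Complex.sub_re,
      re_dotProduct_conjT_apply] at h
    have hPBTg :
        (star a ⬝ᵥ P.apply (B.apply (T.apply g))).re = (star g ⬝ᵥ T.apply g).re := by
      rw [hP.re_dotProduct_apply_comm, re_dotProduct_apply B]
    simp only [quadForm]
    linarith
  have hPab := hP.quadForm_add a b
  have hSu := Smat_quadForm B (R := R) (P := P) u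
  have hSTg : S.quadForm (T.apply g) = (star g ⬝ᵥ T.apply g).re := by
    rw [quadForm, hT.apply_apply, re_star_dotProduct_comm]
  have hcross : (star u ⬝ᵥ S.apply (T.apply g)).re = (star a ⬝ᵥ P.apply b).re := by
    rw [hT.apply_apply, re_dotProduct_conjT_apply, hP.re_dotProduct_apply_comm,
      re_star_dotProduct_comm]
  rw [hKx, sub_neg_eq_add, (Smat_isHermitian B hR hP).quadForm_add, stageCost]
  linarith

end Riccati

section Cost

variable {Q : Matrix (Fin n) (Fin n) ℂ} {R : Matrix (Fin m) (Fin m) ℂ}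
  {x : ℕ → Fin n → ℂ} {u : ℕ → Fin m → ℂ}

lemma stageCost_nonneg (hQ : Q.PosSemidef) (hR : R.PosSemidef) (y : Fin n → ℂ)
    (v : Fin m → ℂ) : 0 ≤ stageCost Q R y v :=
  add_nonneg (hQ.re_dotProduct_nonneg y) (hR.re_dotProduct_nonneg v)

lemma cost_eq_tsum_stageCost :
    cost Q R x u = ∑' k, ENNReal.ofReal (stageCost Q R (x k) (u k)) :=
  rfl

lemma summable_stageCost_of_cost_ne_top (hQ : Q.PosSemidef) (hR : R.PosSemidef)
    (h : cost Q R x u ≠ ⊤) : Summable fun k => stageCost Q R (x k) (u k) := by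
  rw [cost_eq_tsum_stageCost] at h
  simpa only [ENNReal.toReal_ofReal (stageCost_nonneg hQ hR _ _)] using ENNReal.summable_toReal h

lemma cost_eq_ofReal_tsum (hQ : Q.PosSemidef) (hR : R.PosSemidef)
    (hs : Summable fun k => stageCost Q R (x k) (u k)) :
    cost Q R x u = ENNReal.ofReal (∑' k, stageCost Q R (x k) (u k)) :=
  (ENNReal.ofReal_tsum_of_nonneg (fun _ => stageCost_nonneg hQ hR _ _) hs).symm

lemma cost_le_ofReal_of_sum_range_le (hQ : Q.PosSemidef) (hR : R.PosSemidef) {c : ℝ}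
    (h : ∀ N, ∑ k ∈ Finset.range N, stageCost Q R (x k) (u k) ≤ c) :
    cost Q R x u ≤ ENNReal.ofReal c := by
  refine cost_eq_tsum_stageCost ▸ ENNReal.tsum_le_of_sum_range_le fun N => ?_
  rw [← ENNReal.ofReal_sum_of_nonneg fun _ _ => stageCost_nonneg hQ hR _ _]
  exact ENNReal.ofReal_le_ofReal (h N)

lemma tendsto_zero_of_cost_ne_top (hQ : Q.PosDef) (hR : R.PosSemidef) (h : cost Q R x u ≠ ⊤) :
    Tendsto x atTop (𝓝 0) := by
  obtain ⟨c, hc, hcQ⟩ := hQ.exists_pos_mul_sq_norm_le_re_dotProduct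
  have hs := (summable_stageCost_of_cost_ne_top hQ.posSemidef hR h).tendsto_atTop_zero
  have hsq : Tendsto (fun k => ‖x k‖ ^ 2) atTop (𝓝 0) := by
    refine squeeze_zero (fun _ => sq_nonneg _) (fun k => ?_) (by simpa using hs.div_const c)
    rw [le_div_iff₀ hc, mul_comm]
    exact (hcQ (x k)).trans (le_add_of_nonneg_right (hR.re_dotProduct_nonneg (u k)))
  simpa [tendsto_zero_iff_norm_tendsto_zero] using hsq.sqrt

end Cost

section Dissipation

variable (A : Bimatrix n n) (B : Bimatrix n m) {Q : Matrix (Fin n) (Fin n) ℂ}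
  {R : Matrix (Fin m) (Fin m) ℂ} {V : (Fin n → ℂ) → ℝ}
  {W : (Fin n → ℂ) → (Fin m → ℂ) → ℝ}

lemma sum_range_stageCost_traj_add
    (hVW : ∀ y v, V (A.apply y + B.apply v) + stageCost Q R y v = V y + W y v)
    (x₀ : Fin n → ℂ) (u : ℕ → Fin m → ℂ) (N : ℕ) :
    ∑ k ∈ Finset.range N, stageCost Q R (traj A B x₀ u k) (u k) + V (traj A B x₀ u N) =
      V x₀ + ∑ k ∈ Finset.range N, W (traj A B x₀ u k) (u k) := by
  induction N with
  | zero => simp [traj]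
  | succ N ih =>
    rw [Finset.sum_range_succ, Finset.sum_range_succ, traj]
    linarith [hVW (traj A B x₀ u N) (u N)]

lemma ofReal_le_cost_traj
    (hVW : ∀ y v, V (A.apply y + B.apply v) + stageCost Q R y v = V y + W y v)
    (hW : ∀ y v, 0 ≤ W y v) (hV : Continuous V) (hV0 : V 0 = 0) (hQ : Q.PosDef)
    (hR : R.PosSemidef) (x₀ : Fin n → ℂ) (u : ℕ → Fin m → ℂ) :
    ENNReal.ofReal (V x₀) ≤ cost Q R (traj A B x₀ u) u := by
  by_cases hfin : cost Q R (traj A B x₀ u) u = ⊤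
  · simp [hfin]
  have hs := summable_stageCost_of_cost_ne_top hQ.posSemidef hR hfin
  have hVx : Tendsto (fun N => V (traj A B x₀ u N)) atTop (𝓝 0) :=
    hV0 ▸ (hV.tendsto 0).comp (tendsto_zero_of_cost_ne_top hQ hR hfin)
  rw [cost_eq_ofReal_tsum hQ.posSemidef hR hs]
  refine ENNReal.ofReal_le_ofReal (ge_of_tendsto (by simpa using hVx.const_add _)
    (Eventually.of_forall fun N => ?_))
  have htel := sum_range_stageCost_traj_add A B hVW x₀ u N
  have hsum := hs.sum_le_tsum (Finset.range N)
    (fun k _ => stageCost_nonneg hQ.posSemidef hR _ _)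
  have hWsum := Finset.sum_nonneg fun k (_ : k ∈ Finset.range N) => hW (traj A B x₀ u k) (u k)
  linarith

lemma cost_traj_le_ofReal
    (hVW : ∀ y v, V (A.apply y + B.apply v) + stageCost Q R y v = V y + W y v)
    (hV : ∀ y, 0 ≤ V y) (hQ : Q.PosSemidef) (hR : R.PosSemidef) (x₀ : Fin n → ℂ)
    (u : ℕ → Fin m → ℂ) (hu : ∀ k, W (traj A B x₀ u k) (u k) = 0) :
    cost Q R (traj A B x₀ u) u ≤ ENNReal.ofReal (V x₀) := by
  refine cost_le_ofReal_of_sum_range_le hQ hR fun N => ?_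
  have htel := sum_range_stageCost_traj_add A B hVW x₀ u N
  rw [Finset.sum_eq_zero fun k _ => hu k] at htel
  linarith [hV (traj A B x₀ u N)]

end Dissipation

/-- If `{P₁,P₂} > 0` solves the bimatrix Riccati equation with
`{S₁,S₂}⁻¹ = T`, and `{K₁*,K₂*} = -{S}⁻¹{B}^H{P}{A}`, then the closed-loop system is
asymptotically stable, the cost of any control is at least
`Re(x₀^H P₁ x₀ + x₀^H P₂^# x₀^#)`, and the feedback control `u* = {K*} x` attains it. -/
theorem riccati_posDef_optimal
    (A : Bimatrix n n) (B : Bimatrix n m)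
    (Q : Matrix (Fin n) (Fin n) ℂ) (R : Matrix (Fin m) (Fin m) ℂ)
    (hQ : Q.PosDef) (hR : R.PosDef)
    (P : Bimatrix n n) (hP : P.PosDef)
    (T : Bimatrix m m) (hT : (Smat B R P).IsInv T)
    (heq : (Bimatrix.mk Q 0).neg =
      ((A.conjT.mul (P.mul A)).sub P).sub
        (A.conjT.mul (P.mul (B.mul (T.mul (B.conjT.mul (P.mul A)))))))
    (K : Bimatrix m n) (hK : K = (T.mul (B.conjT.mul (P.mul A))).neg) :
    (∀ x : ℕ → Fin n → ℂ,
        (∀ k : ℕ, x (k + 1) = (A.add (B.mul K)).apply (x k)) →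
        Tendsto x atTop (𝓝 0)) ∧
    ∀ x₀ : Fin n → ℂ,
      (∀ u : ℕ → Fin m → ℂ,
          ENNReal.ofReal (P.quadForm x₀) ≤ cost Q R (traj A B x₀ u) u) ∧
      (∀ u : ℕ → Fin m → ℂ, (∀ k : ℕ, u k = K.apply (traj A B x₀ u k)) →
          cost Q R (traj A B x₀ u) u = ENNReal.ofReal (P.quadForm x₀)) := by
  have hstep := riccati_completing_square A B hR.isHermitian hP.1 hT heq
  rw [← hK] at hstep
  have hS (v : Fin m → ℂ) : 0 ≤ (Smat B R P).quadForm v := by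
    rw [Smat_quadForm]
    exact add_nonneg (hR.posSemidef.re_dotProduct_nonneg v) (hP.2.1 _)
  have hlower := ofReal_le_cost_traj A B hstep (fun _ _ => hS _) P.continuous_quadForm
    P.quadForm_zero hQ hR.posSemidef
  have hoptimal (x₀ : Fin n → ℂ) (u : ℕ → Fin m → ℂ)
      (hu : ∀ k, u k = K.apply (traj A B x₀ u k)) :
      cost Q R (traj A B x₀ u) u = ENNReal.ofReal (P.quadForm x₀) :=
    le_antisymm (cost_traj_le_ofReal A B hstep hP.2.1 hQ.posSemidef hR.posSemidef x₀ u
      fun k => by rw [hu k, sub_self, quadForm_zero]) (hlower x₀ u)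
  refine ⟨fun x hx => ?_, fun x₀ => ⟨hlower x₀, hoptimal x₀⟩⟩
  have htraj : traj A B (x 0) (fun k => K.apply (x k)) = x := by
    funext k
    induction k with
    | zero => rfl
    | succ k ih => rw [traj, ih, hx k, Bimatrix.add_apply, Bimatrix.mul_apply]
  have hcost := hoptimal (x 0) _ fun k => by rw [htraj]
  rw [htraj] at hcost
  exact tendsto_zero_of_cost_ne_top hQ hR.posSemidef (hcost ▸ ENNReal.ofReal_ne_top)
end
end

section
/- Let A₀, A_d ∈ ℝ^{n×n}, G₁, G₂ ∈ ℝ^{n×m}, and let ξ : {−1,0,1,2,...} → ℝ^n and v₁, v₂ : ℕ → ℝ^m satisfy the time-delay recursion ξ(k+1) = A₀ξ(k) + A_dξ(k−1) + G₁v₁(k) + G₂v₂(k) for all k ≥ 0. Define x(k) = ξ(k) + j·ξ(k−1) ∈ ℂ^n and u(k) = v₁(k) + j·v₂(k) ∈ ℂ^m for k ≥ 0, where j is the imaginary unit, and set A₁ = (1/2)A₀ + (j/2)(I_n − A_d), A₂ = (1/2)A₀ − (j/2)(I_n + A_d), B₁ = B₂ = (1/2)G₁ − (j/2)G₂. Then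 for all k ≥ 0: x(k+1) = A₁x(k) + A₂^# x^#(k) + B₁u(k) + B₂^# u^#(k). -/
open Matrix Filter Topology
open scoped ENNReal ComplexOrder

noncomputable section

private lemma map_mulVec_ofReal {p q : ℕ} (M : Matrix (Fin p) (Fin q) ℝ) (w : Fin q → ℝ) :
    (M.map Complex.ofReal) *ᵥ (fun i => (w i : ℂ)) = fun i => ((M *ᵥ w) i : ℂ) := by
  funext i
  simp [Matrix.mulVec, dotProduct, Matrix.map_apply]

/-- A real time-delay system `ξ(k+1) = A₀ξ(k) + A_dξ(k−1) + G₁v₁(k)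
+ G₂v₂(k)` can be rewritten as the complex-valued linear system
`x(k+1) = {A₁,A₂}x(k) + {B₁,B₂}u(k)` with `x(k) = ξ(k) + jξ(k−1)`,
`u(k) = v₁(k) + jv₂(k)`, `A₁ = A₀/2 + (j/2)(I − A_d)`, `A₂ = A₀/2 − (j/2)(I + A_d)`,
`B₁ = B₂ = G₁/2 − (j/2)G₂`. -/
theorem timeDelay_as_complexSystem {n m : ℕ}
    (A₀ Ad : Matrix (Fin n) (Fin n) ℝ) (G₁ G₂ : Matrix (Fin n) (Fin m) ℝ)
    (ξ : ℤ → Fin n → ℝ) (v₁ v₂ : ℕ → Fin m → ℝ)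
    (hrec : ∀ k : ℕ, ξ ((k : ℤ) + 1) =
        A₀ *ᵥ ξ (k : ℤ) + Ad *ᵥ ξ ((k : ℤ) - 1) + G₁ *ᵥ v₁ k + G₂ *ᵥ v₂ k)
    (x : ℕ → Fin n → ℂ)
    (hx : ∀ k : ℕ, x k = fun i => (ξ (k : ℤ) i : ℂ) + Complex.I * (ξ ((k : ℤ) - 1) i : ℂ))
    (u : ℕ → Fin m → ℂ)
    (hu : ∀ k : ℕ, u k = fun i => (v₁ k i : ℂ) + Complex.I * (v₂ k i : ℂ))
    (A₁ A₂ : Matrix (Fin n) (Fin n) ℂ) (B₁ B₂ : Matrix (Fin n) (Fin m) ℂ)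
    (hA₁ : A₁ = (1 / 2 : ℂ) • A₀.map Complex.ofReal +
        (Complex.I / 2) • ((1 : Matrix (Fin n) (Fin n) ℂ) - Ad.map Complex.ofReal))
    (hA₂ : A₂ = (1 / 2 : ℂ) • A₀.map Complex.ofReal -
        (Complex.I / 2) • ((1 : Matrix (Fin n) (Fin n) ℂ) + Ad.map Complex.ofReal))
    (hB₁ : B₁ = (1 / 2 : ℂ) • G₁.map Complex.ofReal -
        (Complex.I / 2) • G₂.map Complex.ofReal)
    (hB₂ : B₂ = (1 / 2 : ℂ) • G₁.map Complex.ofReal -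
        (Complex.I / 2) • G₂.map Complex.ofReal) :
    ∀ k : ℕ, x (k + 1) =
      A₁ *ᵥ x k + mconj A₂ *ᵥ star (x k) + B₁ *ᵥ u k + mconj B₂ *ᵥ star (u k) := by
  intro k
  set c : ℤ → Fin n → ℂ := fun t i => (ξ t i : ℂ) with hc
  set w₁ : Fin m → ℂ := fun i => (v₁ k i : ℂ) with hw₁
  set w₂ : Fin m → ℂ := fun i => (v₂ k i : ℂ) with hw₂
  have hxk : x k = c k + Complex.I • c ((k : ℤ) - 1) := by
    funext i; simp [hx k, hc, Pi.smul_apply, smul_eq_mul]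
  have hxkstar : star (x k) = c k - Complex.I • c ((k : ℤ) - 1) := by
    funext i
    simp [hx k, hc, Pi.smul_apply, smul_eq_mul, sub_eq_add_neg, Complex.conj_ofReal]
  have huk : u k = w₁ + Complex.I • w₂ := by
    funext i; simp [hu k, hw₁, hw₂, Pi.smul_apply, smul_eq_mul]
  have hukstar : star (u k) = w₁ - Complex.I • w₂ := by
    funext i
    simp [hu k, hw₁, hw₂, Pi.smul_apply, smul_eq_mul, sub_eq_add_neg, Complex.conj_ofReal]
  have hmA₂ : mconj A₂ = (1 / 2 : ℂ) • A₀.map Complex.ofReal +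
      (Complex.I / 2) • ((1 : Matrix (Fin n) (Fin n) ℂ) + Ad.map Complex.ofReal) := by
    ext i j
    simp [mconj, hA₂, Matrix.map_apply, Matrix.one_apply, apply_ite (starRingEnd ℂ),
      Complex.conj_ofReal, map_sub, _root_.map_mul, map_add, Complex.conj_I, Matrix.add_apply,
      Matrix.sub_apply, Matrix.smul_apply, smul_eq_mul, map_ofNat]
    split_ifs <;> ring
  have hmB₂ : mconj B₂ = (1 / 2 : ℂ) • G₁.map Complex.ofReal +
      (Complex.I / 2) • G₂.map Complex.ofReal := by
    ext i j
    simp [mconj, hB₂, Matrix.map_apply, Complex.conj_ofReal, Complex.conj_I,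
      Matrix.add_apply, Matrix.sub_apply, Matrix.smul_apply, smul_eq_mul, map_ofNat]
    ring
  have hxk1 : x (k + 1) = c ((k : ℤ) + 1) + Complex.I • c (k : ℤ) := by
    funext i
    have : ((k : ℤ) + 1 - 1) = (k : ℤ) := by ring
    simp [hx (k + 1), hc, Pi.smul_apply, smul_eq_mul, this, Nat.cast_add]
  have hrecC : c ((k : ℤ) + 1) = (A₀.map Complex.ofReal) *ᵥ c (k : ℤ) +
      (Ad.map Complex.ofReal) *ᵥ c ((k : ℤ) - 1) +
      (G₁.map Complex.ofReal) *ᵥ w₁ + (G₂.map Complex.ofReal) *ᵥ w₂ := by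
    funext i
    simp only [hc]
    rw [hrec k]
    simp [Matrix.mulVec, dotProduct, Matrix.map_apply, hw₁, hw₂, Pi.add_apply]
    try push_cast
    try ring
  rw [hxk1, hxkstar, hukstar, hxk, huk, hA₁, hmA₂, hB₁, hmB₂, hrecC]
  simp only [Matrix.add_mulVec, Matrix.sub_mulVec, Matrix.smul_mulVec,
    Matrix.mulVec_add, Matrix.mulVec_sub, Matrix.mulVec_smul, Matrix.one_mulVec]
  match_scalars <;> (ring_nf; try simp [Complex.I_sq]; try ring_nf)
end
end
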